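/- arXiv:1408.3463 — 5 statements merged into one kernel-verified Lean document; each statement's English description precedes it below -/
import Mathlib

section
/- Let {u_θ}_{θ∈Θ} be vectors in a finite-dimensional Hilbert space H and {v_θ}_{θ∈Θ} a linearly independent family in a finite-dimensional Hilbert space K. If there exists a completely positive unital map Λ : L(H) → L(K) with Λ(|u_θ⟩⟨u_θ|) = |v_θ⟩⟨v_θ| for all θ, then the family {u_θ} is also linearly independent. -/
open Matrix Finset
open scoped ComplexOrder

noncomputable section

/-- The rank-one operator `|u⟩⟨u|` as a matrix: `(outer u) i j = u i * conj (u j)`. -/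
def outer {n : ℕ} (u : Fin n → ℂ) : Matrix (Fin n) (Fin n) ℂ :=
  Matrix.vecMulVec u (star u)

/-- A linear map on matrices is completely positive iff it admits a Kraus representation. -/
def IsCPMap {n m : ℕ}
    (Λ : Matrix (Fin n) (Fin n) ℂ →ₗ[ℂ] Matrix (Fin m) (Fin m) ℂ) : Prop :=
  ∃ (k : ℕ) (W : Fin k → Matrix (Fin m) (Fin n) ℂ),
    ∀ X, Λ X = ∑ i, W i * X * (W i)ᴴ

/-- `Λ` is unital: `Λ(I) = I`. -/
def IsUnital {n m : ℕ}
    (Λ : Matrix (Fin n) (Fin n) ℂ →ₗ[ℂ] Matrix (Fin m) (Fin m) ℂ) : Prop :=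
  Λ 1 = 1

/-- `Λ` is subunital: `Λ(I) ≤ I` in the Loewner order. -/
def IsSubunital {n m : ℕ}
    (Λ : Matrix (Fin n) (Fin n) ℂ →ₗ[ℂ] Matrix (Fin m) (Fin m) ℂ) : Prop :=
  ((1 : Matrix (Fin m) (Fin m) ℂ) - Λ 1).PosSemidef

/-- Gram matrix of a family of vectors. -/
def gram {Θ : Type*} {n : ℕ} (u : Θ → (Fin n → ℂ)) : Matrix Θ Θ ℂ :=
  Matrix.of fun θ θ' => star (u θ) ⬝ᵥ u θ'

/-- Largest real eigenvalue of a matrix (intended for Hermitian matrices). -/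
def lamMax {n : ℕ} (A : Matrix (Fin n) (Fin n) ℂ) : ℝ :=
  sSup {r : ℝ | ∃ x : Fin n → ℂ, x ≠ 0 ∧ A.mulVec x = (r : ℂ) • x}

/-- Smallest real eigenvalue of a matrix (intended for Hermitian matrices). -/
def lamMin {n : ℕ} (A : Matrix (Fin n) (Fin n) ℂ) : ℝ :=
  sInf {r : ℝ | ∃ x : Fin n → ℂ, x ≠ 0 ∧ A.mulVec x = (r : ℂ) • x}

/-- Operator (spectral) norm of a matrix. -/
def opNorm {n : ℕ} (A : Matrix (Fin n) (Fin n) ℂ) : ℝ :=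
  ‖Matrix.toEuclideanCLM (𝕜 := ℂ) A‖

/-!
Write `Λ` in Kraus form `Λ X = ∑ᵢ Wᵢ X Wᵢᴴ`. Then `Λ |u_θ⟩⟨u_θ| = |v_θ⟩⟨v_θ|` says
`∑ᵢ |Wᵢ u_θ⟩⟨Wᵢ u_θ| = |v_θ⟩⟨v_θ|`; a sum of positive rank-one operators that is itself rank one
has all its terms on the same line, so `Wᵢ u_θ = a_θᵢ v_θ`, and `v_θ ≠ 0` forces some `a_θᵢ ≠ 0`.
Applying `Wᵢ` to a relation `∑ c_θ u_θ = 0` gives `∑ c_θ a_θᵢ v_θ = 0`, so every `c_θ a_θᵢ`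
vanishes and hence every `c_θ`.
-/

lemma mul_outer_mul_conjTranspose {n m : ℕ} (A : Matrix (Fin m) (Fin n) ℂ) (u : Fin n → ℂ) :
    A * outer u * Aᴴ = outer (A *ᵥ u) := by
  rw [outer, outer, mul_vecMulVec, vecMulVec_mul, star_mulVec]

lemma outer_eq_zero_iff {n : ℕ} {u : Fin n → ℂ} : outer u = 0 ↔ u = 0 := by
  simp [outer]

lemma outer_mulVec {n : ℕ} (u x : Fin n → ℂ) : outer u *ᵥ x = (star u ⬝ᵥ x) • u := by
  rw [outer, vecMulVec_mulVec, op_smul_eq_smul]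

lemma star_dotProduct_outer_mulVec {n : ℕ} (u x : Fin n → ℂ) :
    star x ⬝ᵥ (outer u *ᵥ x) = Complex.normSq (star u ⬝ᵥ x) := by
  rw [outer_mulVec, dotProduct_smul, star_dotProduct x, smul_eq_mul]
  exact Complex.mul_conj _

lemma dotProduct_eq_zero_of_sum_outer_eq_outer {ι : Type*} [Fintype ι] {m : ℕ}
    {w : ι → Fin m → ℂ} {v x : Fin m → ℂ} (h : ∑ i, outer (w i) = outer v)
    (hx : star v ⬝ᵥ x = 0) (i : ι) : star (w i) ⬝ᵥ x = 0 := by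
  have hsum : ∑ j, Complex.normSq (star (w j) ⬝ᵥ x) = 0 := by
    have := congrArg (fun M => star x ⬝ᵥ (M *ᵥ x)) h
    simp only [sum_mulVec, dotProduct_sum, star_dotProduct_outer_mulVec, hx, map_zero] at this
    exact_mod_cast this
  rw [← Complex.normSq_eq_zero]
  exact (Finset.sum_eq_zero_iff_of_nonneg fun j _ => Complex.normSq_nonneg _).mp hsum i
    (Finset.mem_univ i)

lemma exists_smul_eq_of_sum_outer_eq_outer {ι : Type*} [Fintype ι] {m : ℕ}
    {w : ι → Fin m → ℂ} {v : Fin m → ℂ} (h : ∑ i, outer (w i) = outer v) (i : ι) :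
    ∃ a : ℂ, w i = a • v := by
  -- `x` is the component of `w i` orthogonal to `v` (for `v = 0`, `a = 0` and `x = w i`).
  set a := (star v ⬝ᵥ w i) / (star v ⬝ᵥ v)
  set x := w i - a • v
  have hvx : star v ⬝ᵥ x = 0 := by
    rcases eq_or_ne (star v ⬝ᵥ v) 0 with hvv | hvv
    · simp [dotProduct_star_self_eq_zero.mp hvv]
    · simp only [x, a, dotProduct_sub, dotProduct_smul, smul_eq_mul]
      field_simp
      ring
  have hxx : star x ⬝ᵥ x = 0 := by
    rw [star_sub, sub_dotProduct, star_smul, smul_dotProduct, hvx,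
      dotProduct_eq_zero_of_sum_outer_eq_outer h hvx i, smul_zero, sub_zero]
  exact ⟨a, sub_eq_zero.mp (dotProduct_star_self_eq_zero.mp hxx)⟩

lemma LinearIndependent.of_map_eq_smul {K E F ι Θ : Type*} [Field K]
    [AddCommGroup E] [Module K E] [AddCommGroup F] [Module K F]
    {u : Θ → E} {v : Θ → F} (hv : LinearIndependent K v) (f : ι → E →ₗ[K] F)
    (a : Θ → ι → K) (hf : ∀ θ i, f i (u θ) = a θ i • v θ) (ha : ∀ θ, ∃ i, a θ i ≠ 0) :
    LinearIndependent K u := by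
  rw [linearIndependent_iff'] at hv ⊢
  intro s c hc θ hθ
  obtain ⟨i, hi⟩ := ha θ
  have hci : ∀ θ ∈ s, c θ * a θ i = 0 := by
    refine hv s (fun θ => c θ * a θ i) ?_
    have := congrArg (f i) hc
    simpa only [map_sum, map_smul, hf, smul_smul, map_zero] using this
  exact (mul_eq_zero.mp (hci θ hθ)).resolve_right hi

theorem stmt1_general {Θ : Type*} {n m : ℕ}
    (u : Θ → (Fin n → ℂ)) (v : Θ → (Fin m → ℂ))
    (hv : LinearIndependent ℂ v)
    (Λ : Matrix (Fin n) (Fin n) ℂ →ₗ[ℂ] Matrix (Fin m) (Fin m) ℂ)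
    (hCP : IsCPMap Λ)
    (hconv : ∀ θ, Λ (outer (u θ)) = outer (v θ)) :
    LinearIndependent ℂ u := by
  obtain ⟨k, W, hW⟩ := hCP
  have hkraus : ∀ θ, ∑ i, outer (W i *ᵥ u θ) = outer (v θ) := fun θ => by
    simp only [← hconv θ, hW, mul_outer_mul_conjTranspose]
  choose a ha using fun θ => exists_smul_eq_of_sum_outer_eq_outer (hkraus θ)
  refine hv.of_map_eq_smul (fun i => (W i).mulVecLin) a ha fun θ => ?_
  by_contra! ha0
  apply hv.ne_zero θ
  rw [← outer_eq_zero_iff, ← hkraus θ]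
  simp [ha, ha0, outer]

theorem stmt1 {Θ : Type*} [Fintype Θ] {n m : ℕ}
    (u : Θ → (Fin n → ℂ)) (v : Θ → (Fin m → ℂ))
    (hv : LinearIndependent ℂ v)
    (Λ : Matrix (Fin n) (Fin n) ℂ →ₗ[ℂ] Matrix (Fin m) (Fin m) ℂ)
    (hCP : IsCPMap Λ) (hUnital : IsUnital Λ)
    (hconv : ∀ θ, Λ (outer (u θ)) = outer (v θ)) :
    LinearIndependent ℂ u :=
  stmt1_general u v hv Λ hCP hconv
end
end

section
/- Let {u_θ}_{θ∈Θ} and {v_θ}_{θ∈Θ} be linearly independent families spanning H and K respectively. There exists a completely positive unital map Λ : L(H) → L(K) with Λ(|u_θ⟩⟨u_θ|) = |v_θ⟩⟨v_θ| for all θ if and only if there exists a positive semidefinite matrix H with unit diagonal such that G_V^{-1} = H ∘ G_U^{-1}. -/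
open Matrix Finset
open scoped ComplexOrder

noncomputable section

/-!
Let `U`, `V` be the matrices with columns `u θ`, `v θ`. As the families are bases,
`U G_U⁻¹ Uᴴ = 1 = V G_V⁻¹ Vᴴ` and `X ↦ V X Vᴴ` is injective. If `Λ` has Kraus operators `W i`,
then `∑ i, |W i u θ⟩⟨W i u θ| = |v θ⟩⟨v θ|` forces `W i u θ = c i θ • v θ`, i.e.
`W i U = V diag (c i)`, and then `∑ i, W i (U A Uᴴ) (W i)ᴴ = V (H ∘ A) Vᴴ` with
`H = ∑ i, c i (c i)ᴴ`, which is positive semidefinite. For `A = G_U⁻¹` this turns unitality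
into `G_V⁻¹ = H ∘ G_U⁻¹`, and `Λ |u θ⟩⟨u θ| = H θ θ • |v θ⟩⟨v θ|` gives the unit diagonal.
Conversely, a decomposition `H = ∑ i, c i (c i)ᴴ` yields the Kraus operators
`W i = V diag (c i) G_U⁻¹ Uᴴ`, which satisfy `W i U = V diag (c i)`.
-/

section MatrixAlgebra

variable {R : Type*} [CommRing R] [StarRing R] {ι Θ p q : Type*} [Fintype ι] [Fintype Θ]
  [Fintype p] [DecidableEq Θ]

lemma mul_vecMulVec_star_mul_conjTranspose (A : Matrix q p R) (x y : p → R) :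
    A * vecMulVec x (star y) * Aᴴ = vecMulVec (A *ᵥ x) (star (A *ᵥ y)) := by
  rw [mul_vecMulVec, vecMulVec_mul, star_mulVec]

lemma sum_diagonal_mul_mul_diagonal_conjTranspose (c : ι → Θ → R) (A : Matrix Θ Θ R) :
    ∑ i, diagonal (c i) * A * (diagonal (c i))ᴴ =
      hadamard (∑ i, vecMulVec (c i) (star (c i))) A := by
  ext θ θ'
  simp only [Matrix.sum_apply, diagonal_conjTranspose, mul_diagonal, diagonal_mul,
    hadamard_apply, vecMulVec_apply, Pi.star_apply, Finset.sum_mul]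
  exact Finset.sum_congr rfl fun i _ => by ring

lemma sum_mul_conj_mul_conjTranspose_of_mul_eq (U : Matrix p Θ R) (V : Matrix q Θ R)
    (W : ι → Matrix q p R) (c : ι → Θ → R) (hW : ∀ i, W i * U = V * diagonal (c i))
    (A : Matrix Θ Θ R) :
    ∑ i, W i * (U * A * Uᴴ) * (W i)ᴴ =
      V * hadamard (∑ i, vecMulVec (c i) (star (c i))) A * Vᴴ := by
  have hconj : ∀ i, W i * (U * A * Uᴴ) * (W i)ᴴ =
      V * (diagonal (c i) * A * (diagonal (c i))ᴴ) * Vᴴ := by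
    intro i
    rw [show W i * (U * A * Uᴴ) * (W i)ᴴ = W i * U * A * (W i * U)ᴴ by
      simp only [conjTranspose_mul, Matrix.mul_assoc], hW i]
    simp only [conjTranspose_mul, Matrix.mul_assoc]
  simp only [hconj, ← Matrix.sum_mul, ← Matrix.mul_sum,
    sum_diagonal_mul_mul_diagonal_conjTranspose]

end MatrixAlgebra

lemma eq_smul_of_sum_vecMulVec_eq {ι n : Type*} [Fintype ι] [Fintype n] {x : ι → n → ℂ}
    {v : n → ℂ} (hv : v ≠ 0) (h : ∑ i, vecMulVec (x i) (star (x i)) = vecMulVec v (star v))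
    (i : ι) : ∃ a : ℂ, x i = a • v := by
  have horth : ∀ w, star v ⬝ᵥ w = 0 → star (x i) ⬝ᵥ w = 0 := by
    intro w hw
    -- evaluating both sides at `w` gives `∑ j, |⟨x j, w⟩|² = |⟨v, w⟩|² = 0`
    have h1 := congrArg (fun M => star w ⬝ᵥ M *ᵥ w) h
    simp only [Matrix.sum_mulVec, vecMulVec_mulVec, op_smul_eq_smul, hw, zero_smul,
      dotProduct_zero, dotProduct_sum, dotProduct_smul, smul_eq_mul] at h1
    have hf : (fun j => star (x j) ⬝ᵥ w) ⬝ᵥ star (fun j => star (x j) ⬝ᵥ w) = 0 := by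
      simp_rw [star_dotProduct w] at h1
      exact h1
    exact congrFun (dotProduct_self_star_eq_zero.1 hf) i
  set a := (star v ⬝ᵥ x i) / (star v ⬝ᵥ v)
  have hvv : star v ⬝ᵥ v ≠ 0 := fun h0 => hv (dotProduct_star_self_eq_zero.1 h0)
  have hw : star v ⬝ᵥ (x i - a • v) = 0 := by
    rw [dotProduct_sub, dotProduct_smul, smul_eq_mul, div_mul_cancel₀ _ hvv, sub_self]
  refine ⟨a, sub_eq_zero.1 (dotProduct_star_self_eq_zero.1 ?_)⟩
  rw [star_sub, sub_dotProduct, star_smul, smul_dotProduct, horth _ hw, hw, smul_zero, sub_zero]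

def familyMatrix {R ι Θ : Type*} (u : Θ → ι → R) : Matrix ι Θ R := (Matrix.of u)ᵀ

lemma mul_familyMatrix_eq_iff {R Θ p q : Type*} [CommRing R] [Fintype Θ] [Fintype p]
    [DecidableEq Θ]
    (W : Matrix q p R) (u : Θ → p → R) (v : Θ → q → R) (c : Θ → R) :
    W * familyMatrix u = familyMatrix v * diagonal c ↔ ∀ θ, W *ᵥ u θ = c θ • v θ := by
  rw [← Matrix.ext_iff]
  simp only [mul_diagonal]
  simp only [funext_iff, mul_apply, mulVec, dotProduct, familyMatrix,
    transpose_apply, of_apply, Pi.smul_apply, smul_eq_mul, mul_comm (c _)]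
  exact forall_comm

lemma gram_eq_conjTranspose_familyMatrix_mul {Θ : Type*} {n : ℕ} (u : Θ → Fin n → ℂ) :
    gram u = (familyMatrix u)ᴴ * familyMatrix u := by
  ext θ θ'
  simp [_root_.gram, familyMatrix, mul_apply, dotProduct]

section Gram

variable {Θ : Type*} [Fintype Θ] [DecidableEq Θ] {n : ℕ}

lemma isUnit_gram_det {u : Θ → Fin n → ℂ} (hu : LinearIndependent ℂ u) :
    IsUnit (gram u).det := by
  rw [← isUnit_iff_isUnit_det, gram_eq_conjTranspose_familyMatrix_mul]
  exact (PosDef.conjTranspose_mul_self _ (mulVec_injective_iff.2 hu)).isUnit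

lemma familyMatrix_mul_inv_gram_mul_conjTranspose {u : Θ → Fin n → ℂ}
    (hu : LinearIndependent ℂ u) (hus : Submodule.span ℂ (Set.range u) = ⊤) :
    familyMatrix u * (gram u)⁻¹ * (familyMatrix u)ᴴ = 1 := by
  have hsurj : Function.Surjective (familyMatrix u).mulVec :=
    (LinearMap.range_eq_top (f := (familyMatrix u).mulVecLin)).1 <| by
      rw [range_mulVecLin]; exact hus
  obtain ⟨B, hB⟩ := mulVec_surjective_iff_exists_right_inverse.1 hsurj
  calc familyMatrix u * (gram u)⁻¹ * (familyMatrix u)ᴴ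
      = familyMatrix u * (gram u)⁻¹ * (familyMatrix u)ᴴ * (familyMatrix u * B) := by
        rw [hB, Matrix.mul_one]
    _ = familyMatrix u * ((gram u)⁻¹ * gram u) * B := by
        simp only [gram_eq_conjTranspose_familyMatrix_mul, Matrix.mul_assoc]
    _ = 1 := by rw [nonsing_inv_mul _ (isUnit_gram_det hu), Matrix.mul_one, hB]

lemma familyMatrix_mul_mul_conjTranspose_injective {m : ℕ} {v : Θ → Fin m → ℂ}
    (hv : LinearIndependent ℂ v) :
    Function.Injective fun X : Matrix Θ Θ ℂ => familyMatrix v * X * (familyMatrix v)ᴴ := by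
  refine Function.LeftInverse.injective
    (g := fun M => (gram v)⁻¹ * (familyMatrix v)ᴴ * M * familyMatrix v * (gram v)⁻¹) fun X => ?_
  calc (gram v)⁻¹ * (familyMatrix v)ᴴ * (familyMatrix v * X * (familyMatrix v)ᴴ) *
        familyMatrix v * (gram v)⁻¹
      = ((gram v)⁻¹ * gram v) * X * (gram v * (gram v)⁻¹) := by
        simp only [gram_eq_conjTranspose_familyMatrix_mul, Matrix.mul_assoc]
    _ = X := by
        rw [nonsing_inv_mul _ (isUnit_gram_det hv), mul_nonsing_inv _ (isUnit_gram_det hv),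
          Matrix.one_mul, Matrix.mul_one]

end Gram

def krausMap {n m k : ℕ} (W : Fin k → Matrix (Fin m) (Fin n) ℂ) :
    Matrix (Fin n) (Fin n) ℂ →ₗ[ℂ] Matrix (Fin m) (Fin m) ℂ where
  toFun X := ∑ i, W i * X * (W i)ᴴ
  map_add' X Y := by simp only [Matrix.mul_add, Matrix.add_mul, Finset.sum_add_distrib]
  map_smul' r X := by
    simp only [Matrix.mul_smul, Matrix.smul_mul, Finset.smul_sum, RingHom.id_apply]

lemma isCPMap_krausMap {n m k : ℕ} (W : Fin k → Matrix (Fin m) (Fin n) ℂ) :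
    IsCPMap (krausMap W) :=
  ⟨k, W, fun _ => rfl⟩

section Kraus

variable {Θ ι : Type*} [Fintype Θ] [DecidableEq Θ] [Fintype ι] {n m : ℕ}
  {u : Θ → Fin n → ℂ} {v : Θ → Fin m → ℂ} {W : ι → Matrix (Fin m) (Fin n) ℂ} {c : ι → Θ → ℂ}

lemma sum_kraus_one_eq_one_iff (hu : LinearIndependent ℂ u)
    (hus : Submodule.span ℂ (Set.range u) = ⊤) (hv : LinearIndependent ℂ v)
    (hvs : Submodule.span ℂ (Set.range v) = ⊤)
    (hW : ∀ i, W i * familyMatrix u = familyMatrix v * diagonal (c i)) :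
    ∑ i, W i * (1 : Matrix (Fin n) (Fin n) ℂ) * (W i)ᴴ = 1 ↔
      (gram v)⁻¹ = hadamard (∑ i, vecMulVec (c i) (star (c i))) (gram u)⁻¹ := by
  have hsum := sum_mul_conj_mul_conjTranspose_of_mul_eq _ _ W c hW (gram u)⁻¹
  rw [familyMatrix_mul_inv_gram_mul_conjTranspose hu hus] at hsum
  rw [hsum, ← familyMatrix_mul_inv_gram_mul_conjTranspose hv hvs,
    (familyMatrix_mul_mul_conjTranspose_injective hv).eq_iff, eq_comm]

lemma sum_kraus_outer_eq_outer_iff {θ : Θ} (hvθ : v θ ≠ 0)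
    (hW : ∀ i, W i * familyMatrix u = familyMatrix v * diagonal (c i)) :
    ∑ i, W i * outer (u θ) * (W i)ᴴ = outer (v θ) ↔
      (∑ i, vecMulVec (c i) (star (c i))) θ θ = 1 := by
  have hWu : ∀ i, W i *ᵥ u θ = c i θ • v θ :=
    fun i => (mul_familyMatrix_eq_iff _ _ _ _).1 (hW i) θ
  have hsum : ∑ i, W i * outer (u θ) * (W i)ᴴ =
      (∑ i, vecMulVec (c i) (star (c i))) θ θ • outer (v θ) := by
    simp only [outer, mul_vecMulVec_star_mul_conjTranspose, hWu, star_smul, smul_vecMulVec,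
      vecMulVec_smul, smul_smul, mul_comm (star (c _ θ)), Matrix.sum_apply, vecMulVec_apply,
      Pi.star_apply, Finset.sum_smul]
  have houter : outer (v θ) ≠ 0 := vecMulVec_ne_zero hvθ (star_ne_zero.2 hvθ)
  rw [hsum]
  exact ⟨fun h => smul_left_injective ℂ houter (by simpa only [one_smul] using h),
    fun h => by rw [h, one_smul]⟩

end Kraus

theorem stmt4 {Θ : Type*} [Fintype Θ] [DecidableEq Θ] {n m : ℕ}
    (u : Θ → (Fin n → ℂ)) (v : Θ → (Fin m → ℂ))
    (hu : LinearIndependent ℂ u) (hv : LinearIndependent ℂ v)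
    (hus : Submodule.span ℂ (Set.range u) = ⊤)
    (hvs : Submodule.span ℂ (Set.range v) = ⊤) :
    (∃ Λ : Matrix (Fin n) (Fin n) ℂ →ₗ[ℂ] Matrix (Fin m) (Fin m) ℂ,
        IsCPMap Λ ∧ IsUnital Λ ∧ ∀ θ, Λ (outer (u θ)) = outer (v θ)) ↔
      ∃ H : Matrix Θ Θ ℂ, H.PosSemidef ∧ (∀ θ, H θ θ = 1) ∧
        (gram v)⁻¹ = Matrix.hadamard H (gram u)⁻¹ := by
  constructor
  · rintro ⟨Λ, ⟨k, W, hΛ⟩, hunital, houter⟩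
    have hkraus : ∀ θ, ∑ i, W i * outer (u θ) * (W i)ᴴ = outer (v θ) := fun θ =>
      (hΛ _).symm.trans (houter θ)
    choose c hc using fun i θ => eq_smul_of_sum_vecMulVec_eq (hv.ne_zero θ)
      (by simpa only [outer, mul_vecMulVec_star_mul_conjTranspose] using hkraus θ) i
    have hW : ∀ i, W i * familyMatrix u = familyMatrix v * diagonal (c i) :=
      fun i => (mul_familyMatrix_eq_iff _ _ _ _).2 (hc i)
    exact ⟨_, posSemidef_iff_eq_sum_vecMulVec.2 ⟨k, c, rfl⟩,
      fun θ => (sum_kraus_outer_eq_outer_iff (hv.ne_zero θ) hW).1 (hkraus θ),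
      (sum_kraus_one_eq_one_iff hu hus hv hvs hW).1 ((hΛ 1).symm.trans hunital)⟩
  · rintro ⟨H, hH, hdiag, hinv⟩
    obtain ⟨k, c, rfl⟩ := posSemidef_iff_eq_sum_vecMulVec.1 hH
    set W : Fin k → Matrix (Fin m) (Fin n) ℂ :=
      fun i => familyMatrix v * diagonal (c i) * (gram u)⁻¹ * (familyMatrix u)ᴴ
    have hW : ∀ i, W i * familyMatrix u = familyMatrix v * diagonal (c i) := fun i => by
      simp only [W, Matrix.mul_assoc, ← gram_eq_conjTranspose_familyMatrix_mul,
        nonsing_inv_mul _ (isUnit_gram_det hu), Matrix.mul_one]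
    exact ⟨krausMap W, isCPMap_krausMap W, (sum_kraus_one_eq_one_iff hu hus hv hvs hW).2 hinv,
      fun θ => (sum_kraus_outer_eq_outer_iff (hv.ne_zero θ) hW).2 (hdiag θ)⟩
end
end

section
/- In the commuting (diagonal) setting, there exists a completely positive subunital map Λ with Λ(L_θ) = M_θ for all θ if and only if for every real vector (x_θ), max(λ_max(Σ_θ x_θ L_θ), 0) ≥ max(λ_max(Σ_θ x_θ M_θ), 0). -/
open Matrix Finset
open scoped ComplexOrder

noncomputable section

/-! A completely positive map is positive. If `u ≥ 0` dominates every eigenvalue of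
`∑ x_θ L_θ`, then `Λ (u I - ∑ x_θ L_θ) + u (I - Λ I) = u I - ∑ x_θ M_θ` is positive
semidefinite, so `u` also dominates the eigenvalues of `∑ x_θ M_θ`.

Conversely, for diagonal matrices the inequality says that no half-space of `ℝ^Θ` separates
the point `(m_{θ,j})_θ` from `0` and the points `(l_{θ,i})_θ`. By Hahn–Banach it is then a
convex combination `∑_i P_{j,i} (l_{θ,i})_θ + (1 - ∑_i P_{j,i}) · 0`, and the classical
channel of the substochastic matrix `P` maps each `L_θ` to `M_θ`. -/

section Spectrum

variable {k : ℕ}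

lemma lamMax_diagonal_ofReal (d : Fin k → ℝ) :
    lamMax (diagonal fun i => (d i : ℂ)) = sSup (Set.range d) := by
  rw [lamMax]
  congr 1
  ext r
  constructor
  · rintro ⟨x, hx, hEq⟩
    obtain ⟨i, hi⟩ := Function.ne_iff.mp hx
    have h := congrFun hEq i
    rw [mulVec_diagonal, Pi.smul_apply, smul_eq_mul] at h
    exact ⟨i, by exact_mod_cast mul_right_cancel₀ hi h⟩
  · rintro ⟨i, rfl⟩
    refine ⟨Pi.single i 1, by simp, ?_⟩
    ext a
    by_cases h : a = i <;> simp [mulVec_diagonal, h]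

lemma max_lamMax_diagonal_le_iff (d : Fin k → ℝ) (u : ℝ) :
    max (lamMax (diagonal fun i => (d i : ℂ))) 0 ≤ u ↔ 0 ≤ u ∧ ∀ i, d i ≤ u := by
  rw [lamMax_diagonal_ofReal, max_le_iff, and_comm]
  refine and_congr_right fun hu => ⟨fun h i => ?_, fun h => ?_⟩
  · exact (le_csSup (Set.finite_range d).bddAbove ⟨i, rfl⟩).trans h
  · exact Real.sSup_le (by rintro _ ⟨i, rfl⟩; exact h i) hu

lemma max_lamMax_diagonal_le_max_iff {n m : ℕ} (a : Fin n → ℝ) (b : Fin m → ℝ) :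
    max (lamMax (diagonal fun j => (b j : ℂ))) 0 ≤
        max (lamMax (diagonal fun i => (a i : ℂ))) 0 ↔
      ∀ u, 0 ≤ u → (∀ i, a i ≤ u) → ∀ j, b j ≤ u := by
  refine ⟨fun h u hu ha => ((max_lamMax_diagonal_le_iff b u).1
    (h.trans ((max_lamMax_diagonal_le_iff a u).2 ⟨hu, ha⟩))).2, fun h => ?_⟩
  obtain ⟨hc, hac⟩ := (max_lamMax_diagonal_le_iff a _).1 le_rfl
  exact (max_lamMax_diagonal_le_iff b _).2 ⟨hc, h _ hc hac⟩

end Spectrum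

lemma sum_smul_diagonal_ofReal {Θ : Type*} [Fintype Θ] {k : ℕ} (g : Θ → Fin k → ℝ)
    (x : Θ → ℝ) :
    ∑ θ, (x θ : ℂ) • diagonal (fun i => (g θ i : ℂ)) =
      diagonal fun i => ((∑ θ, x θ * g θ i : ℝ) : ℂ) := by
  ext i j
  rcases eq_or_ne i j with rfl | h
  · simp [Matrix.sum_apply]
  · simp [Matrix.sum_apply, diagonal_apply_ne _ h]

lemma posSemidef_smul_one_sub_diagonal_ofReal_iff {k : ℕ} (u : ℝ) (a : Fin k → ℝ) :
    ((u : ℂ) • (1 : Matrix (Fin k) (Fin k) ℂ) - diagonal fun i => (a i : ℂ)).PosSemidef ↔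
      ∀ i, a i ≤ u := by
  rw [smul_one_eq_diagonal, diagonal_sub, posSemidef_diagonal_iff]
  simp only [← Complex.ofReal_sub, Complex.zero_le_real, sub_nonneg]

namespace IsCPMap

variable {n m : ℕ} {Λ : Matrix (Fin n) (Fin n) ℂ →ₗ[ℂ] Matrix (Fin m) (Fin m) ℂ}

lemma posSemidef_apply (hΛ : IsCPMap Λ) {A : Matrix (Fin n) (Fin n) ℂ} (hA : A.PosSemidef) :
    (Λ A).PosSemidef := by
  obtain ⟨k, W, hW⟩ := hΛ
  rw [hW]
  exact posSemidef_sum _ fun i _ => hA.mul_mul_conjTranspose_same (W i)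

lemma le_of_map_diagonal (hΛ : IsCPMap Λ) (hsub : IsSubunital Λ) {a : Fin n → ℝ}
    {b : Fin m → ℝ} (hab : Λ (diagonal fun i => (a i : ℂ)) = diagonal fun j => (b j : ℂ))
    {u : ℝ} (hu : 0 ≤ u) (ha : ∀ i, a i ≤ u) (j : Fin m) : b j ≤ u := by
  have hpos := (hΛ.posSemidef_apply
    ((posSemidef_smul_one_sub_diagonal_ofReal_iff u a).2 ha)).add
    (hsub.smul (by exact_mod_cast hu : (0 : ℂ) ≤ u))
  have hsplit : Λ ((u : ℂ) • 1 - diagonal fun i => (a i : ℂ)) +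
      (u : ℂ) • (1 - Λ 1) = (u : ℂ) • 1 - diagonal fun j => (b j : ℂ) := by
    rw [map_sub, map_smul, hab, smul_sub]
    abel
  rw [hsplit] at hpos
  exact (posSemidef_smul_one_sub_diagonal_ofReal_iff u b).1 hpos j

end IsCPMap

section ClassicalChannel

variable {n m : ℕ} (P : Matrix (Fin m) (Fin n) ℝ)

/-- The map `X ↦ diag(P · diag X)`: it measures in the basis `e_i` and then acts by the
substochastic matrix `P`. -/
def classicalChannel : Matrix (Fin n) (Fin n) ℂ →ₗ[ℂ] Matrix (Fin m) (Fin m) ℂ :=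
  diagonalLinearMap (Fin m) ℂ ℂ ∘ₗ (P.map ((↑) : ℝ → ℂ)).mulVecLin ∘ₗ
    diagLinearMap (Fin n) ℂ ℂ

lemma classicalChannel_apply (X : Matrix (Fin n) (Fin n) ℂ) :
    classicalChannel P X = diagonal fun j => ∑ i, (P j i : ℂ) * X i i := rfl

lemma classicalChannel_apply_diagonal_ofReal (d : Fin n → ℝ) :
    classicalChannel P (diagonal fun i => (d i : ℂ)) =
      diagonal fun j => ((P *ᵥ d) j : ℂ) := by
  simp [classicalChannel_apply, mulVec, dotProduct]

lemma isCPMap_classicalChannel (hP : ∀ j i, 0 ≤ P j i) : IsCPMap (classicalChannel P) := by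
  set W : Fin m × Fin n → Matrix (Fin m) (Fin n) ℂ :=
    fun q => single q.1 q.2 (√(P q.1 q.2) : ℂ)
  have hW : ∀ (X : Matrix (Fin n) (Fin n) ℂ) q,
      W q * X * (W q)ᴴ = single q.1 q.1 ((P q.1 q.2 : ℂ) * X q.2 q.2) := by
    intro X q
    simp only [W]
    rw [conjTranspose_single, single_mul_mul_single, Complex.star_def, Complex.conj_ofReal,
      mul_comm, ← mul_assoc, ← Complex.ofReal_mul, Real.mul_self_sqrt (hP q.1 q.2)]
  refine ⟨m * n, fun t => W (finProdFinEquiv.symm t), fun X => ?_⟩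
  rw [finProdFinEquiv.symm.sum_comp (fun q => W q * X * (W q)ᴴ), classicalChannel_apply,
    ← sum_single_eq_diagonal]
  simp only [Fintype.sum_prod_type, hW]
  exact Finset.sum_congr rfl fun j _ => map_sum (singleAddMonoidHom j j) _ _

lemma isSubunital_classicalChannel (hP : ∀ j, ∑ i, P j i ≤ 1) :
    IsSubunital (classicalChannel P) := by
  have h1 : (1 : Matrix (Fin n) (Fin n) ℂ) = diagonal fun _ => ((1 : ℝ) : ℂ) := by simp
  rw [IsSubunital, h1, classicalChannel_apply_diagonal_ofReal, ← one_smul ℂ 1,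
    ← Complex.ofReal_one, posSemidef_smul_one_sub_diagonal_ofReal_iff]
  intro j
  simpa [mulVec, dotProduct] using hP j

end ClassicalChannel

lemma exists_mem_stdSimplex_of_forall_dual_le {ι E : Type*} [Fintype ι] [NormedAddCommGroup E]
    [NormedSpace ℝ E] (v : ι → E) (w : E)
    (h : ∀ (f : StrongDual ℝ E) (u : ℝ), (∀ i, f (v i) ≤ u) → f w ≤ u) :
    ∃ q ∈ stdSimplex ℝ ι, ∑ i, q i • v i = w := by
  classical
  set T := Fintype.linearCombination ℝ v
  have hK : IsCompact (T '' stdSimplex ℝ ι) :=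
    (isCompact_stdSimplex ℝ ι).image T.continuous_of_finiteDimensional
  by_contra hw
  obtain ⟨f, u, hfK, hfw⟩ := geometric_hahn_banach_closed_point
    ((convex_stdSimplex ℝ ι).linear_image T) hK.isClosed
    (by simpa [T, Fintype.linearCombination_apply] using hw)
  refine hfw.not_ge (h f u fun i => (hfK _ ⟨Pi.single i 1, single_mem_stdSimplex ℝ i, ?_⟩).le)
  simp [T, Fintype.linearCombination_apply]

lemma exists_substochastic_of_forall_le {ι Θ : Type*} [Fintype ι] [Fintype Θ]
    (v : ι → Θ → ℝ) (w : Θ → ℝ)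
    (h : ∀ (x : Θ → ℝ) (u : ℝ), 0 ≤ u → (∀ i, ∑ θ, x θ * v i θ ≤ u) → ∑ θ, x θ * w θ ≤ u) :
    ∃ p : ι → ℝ, (∀ i, 0 ≤ p i) ∧ ∑ i, p i ≤ 1 ∧ ∑ i, p i • v i = w := by
  classical
  -- The extra point `none ↦ 0` absorbs the missing mass `1 - ∑ i, p i`.
  obtain ⟨q, ⟨hq0, hq1⟩, hqw⟩ := exists_mem_stdSimplex_of_forall_dual_le
      (fun o : Option ι => o.elim 0 v) w fun f u hf => by
    set x : Θ → ℝ := fun θ => f fun θ' => if θ = θ' then 1 else 0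
    have hfx : ∀ y, f y = ∑ θ, x θ * y θ := fun y => by
      simpa [mul_comm] using (f : (Θ → ℝ) →ₗ[ℝ] ℝ).pi_apply_eq_sum_univ y
    have hu : 0 ≤ u := by simpa using hf none
    simpa [hfx] using h x u hu fun i => by simpa [hfx] using hf (some i)
  rw [Fintype.sum_option] at hq1 hqw
  refine ⟨fun i => q (some i), fun i => hq0 _, ?_, by simpa using hqw⟩
  linarith [hq0 none]

theorem stmt15 {Θ : Type*} [Fintype Θ] {n m : ℕ}
    (l : Θ → Fin n → ℝ) (mc : Θ → Fin m → ℝ) :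
    (∃ Λ : Matrix (Fin n) (Fin n) ℂ →ₗ[ℂ] Matrix (Fin m) (Fin m) ℂ,
        IsCPMap Λ ∧ IsSubunital Λ ∧
        ∀ θ, Λ (Matrix.diagonal fun i => (l θ i : ℂ)) =
              Matrix.diagonal fun j => (mc θ j : ℂ)) ↔
      ∀ x : Θ → ℝ,
        max (lamMax (∑ θ, (x θ : ℂ) • Matrix.diagonal fun i => (l θ i : ℂ))) 0 ≥
          max (lamMax (∑ θ, (x θ : ℂ) • Matrix.diagonal fun j => (mc θ j : ℂ))) 0 := by
  simp only [sum_smul_diagonal_ofReal, ge_iff_le, max_lamMax_diagonal_le_max_iff]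
  constructor
  · rintro ⟨Λ, hCP, hsub, hmap⟩ x u hu hl
    refine hCP.le_of_map_diagonal hsub ?_ hu hl
    simp only [← sum_smul_diagonal_ofReal, map_sum, map_smul, hmap]
  · intro h
    choose P hP0 hP1 hPl using fun j => exists_substochastic_of_forall_le
      (fun i θ => l θ i) (fun θ => mc θ j) fun x u hu hl => h x u hu hl j
    refine ⟨classicalChannel (of P), isCPMap_classicalChannel _ hP0,
      isSubunital_classicalChannel _ hP1, fun θ => ?_⟩
    rw [classicalChannel_apply_diagonal_ofReal]
    congr 1
    ext j
    exact congrArg _ (by simpa [mulVec, dotProduct] using congrFun (hPl j) θ)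
end
end

section
/- Let {u_θ}_{θ∈Θ}, {v_θ}_{θ∈Θ} be linearly independent families spanning H and K (so |Θ| = dim H = dim K), with matrices [U] = Σ_θ |u_θ⟩⟨e_θ| and [V] = Σ_θ |v_θ⟩⟨f_θ| for orthonormal bases {e_θ}, {f_θ}. A completely positive map Λ with Kraus operators W_i satisfies W_i u_θ = α_{θ,i} v_θ for all θ, i if and only if W_i = [V] · diag(α_{1,i},…,α_{|Θ|,i}) · [U]^{-1}; and for such Λ, Σ_i W_i W_i† = [V] (H ∘ G_U^{-1}) [V]† where H_{θθ'} := Σ_i α_{θ,i} \overline{α_{θ',i}}. -/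
open Matrix Finset
open scoped ComplexOrder

noncomputable section

/-! Since the `u_θ` form a basis, `[U]` is invertible, and the conditions `W_i u_θ = α_{θ,i} v_θ`
say column by column that `W_i [U] = [V] D_i` with `D_i = diag(α_{·,i})`. Hence
`W_i W_i† = [V] D_i G_U⁻¹ D_i† [V]†`, because `[U]⁻¹ ([U]⁻¹)† = ([U]† [U])⁻¹ = G_U⁻¹`, and
`Σ_i D_i G D_i† = H ∘ G` entrywise. -/

namespace Matrix

variable {l m n R : Type*}

theorem mul_of_cols [Fintype m] [NonUnitalNonAssocSemiring R] (M : Matrix l m R)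
    (u : n → m → R) : M * (of fun x θ => u θ x) = of fun x θ => (M *ᵥ u θ) x := by
  ext x θ
  simp only [mul_apply, of_apply, mulVec, dotProduct]

theorem of_cols_mul_diagonal [Fintype n] [DecidableEq n] [CommSemiring R] (v : n → m → R)
    (a : n → R) : (of fun x θ => v θ x) * diagonal a = of fun x θ => (a θ • v θ) x := by
  ext x θ
  simp only [mul_diagonal, of_apply, Pi.smul_apply, smul_eq_mul, mul_comm]

theorem mulVec_cols_eq_smul_iff [Fintype m] [Fintype n] [DecidableEq n] [CommSemiring R]
    (M : Matrix l m R) (u : n → m → R) (v : n → l → R) (a : n → R) :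
    (∀ θ, M *ᵥ u θ = a θ • v θ) ↔
      M * (of fun x θ => u θ x) = (of fun x θ => v θ x) * diagonal a := by
  simp only [mul_of_cols, of_cols_mul_diagonal, EmbeddingLike.apply_eq_iff_eq, funext_iff]
  exact forall_comm

theorem mulVec_cols_eq_smul_iff_eq_mul_inv [Fintype n] [DecidableEq n] [Field R]
    (M : Matrix m n R) {u : n → n → R} (hu : LinearIndependent R u) (v : n → m → R) (a : n → R) :
    (∀ θ, M *ᵥ u θ = a θ • v θ) ↔
      M = (of fun x θ => v θ x) * diagonal a * (of fun x θ => u θ x)⁻¹ := by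
  have : Invertible (of fun x θ => u θ x) :=
    (linearIndependent_cols_iff_isUnit.mp hu).invertible
  rw [mulVec_cols_eq_smul_iff]
  exact ⟨fun h => by rw [← h, mul_inv_cancel_right_of_invertible],
    fun h => by rw [h, inv_mul_cancel_right_of_invertible]⟩

theorem sum_diagonal_mul_mul_diagonal_conjTranspose [Fintype l] [Fintype n] [DecidableEq n]
    [CommSemiring R] [StarRing R] (α : n → l → R) (G : Matrix n n R) :
    ∑ i, diagonal (fun θ => α θ i) * G * (diagonal fun θ => α θ i)ᴴ =
      hadamard (of fun θ θ' => ∑ i, α θ i * star (α θ' i)) G := by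
  ext θ θ'
  simp only [diagonal_conjTranspose, sum_apply, mul_diagonal, diagonal_mul, hadamard_apply,
    of_apply, Pi.star_apply, Finset.sum_mul]
  exact Finset.sum_congr rfl fun i _ => by ring

theorem sum_mul_diagonal_mul_inv_mul_conjTranspose [Fintype l] [Fintype n] [DecidableEq n]
    [CommRing R] [StarRing R] (V : Matrix m n R) (U : Matrix n n R) (α : n → l → R) :
    ∑ i, V * diagonal (fun θ => α θ i) * U⁻¹ * (V * diagonal (fun θ => α θ i) * U⁻¹)ᴴ =
      V * hadamard (of fun θ θ' => ∑ i, α θ i * star (α θ' i)) (Uᴴ * U)⁻¹ * Vᴴ := by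
  have hinv : (Uᴴ * U)⁻¹ = U⁻¹ * U⁻¹ᴴ := by
    rw [mul_inv_rev, conjTranspose_nonsing_inv]
  rw [hinv, ← sum_diagonal_mul_mul_diagonal_conjTranspose, Matrix.mul_sum, Matrix.sum_mul]
  refine Finset.sum_congr rfl fun i _ => ?_
  simp only [conjTranspose_mul, Matrix.mul_assoc]

end Matrix

theorem gram_eq_conjTranspose_mul {Θ : Type*} {n : ℕ} (u : Θ → Fin n → ℂ) :
    gram u = (of fun x θ => u θ x)ᴴ * of fun x θ => u θ x := by
  ext θ θ'
  simp only [_root_.gram, of_apply, mul_apply, conjTranspose_apply, dotProduct, Pi.star_apply]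

theorem stmt17_general {N k : ℕ}
    (u v : Fin N → (Fin N → ℂ))
    (hu : LinearIndependent ℂ u)
    (W : Fin k → Matrix (Fin N) (Fin N) ℂ) (α : Fin N → Fin k → ℂ) :
    ((∀ i θ, (W i).mulVec (u θ) = α θ i • v θ) ↔
      (∀ i, W i =
        (Matrix.of fun x θ => v θ x) * Matrix.diagonal (fun θ => α θ i) *
          (Matrix.of fun x θ => u θ x)⁻¹)) ∧
    ((∀ i θ, (W i).mulVec (u θ) = α θ i • v θ) →
      ∑ i, W i * (W i)ᴴ =
        (Matrix.of fun x θ => v θ x) *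
          Matrix.hadamard (Matrix.of fun θ θ' => ∑ i, α θ i * star (α θ' i)) (gram u)⁻¹ *
          (Matrix.of fun x θ => v θ x)ᴴ) := by
  have hW := fun i => mulVec_cols_eq_smul_iff_eq_mul_inv (W i) hu v (α · i)
  refine ⟨forall_congr' hW, fun h => ?_⟩
  rw [gram_eq_conjTranspose_mul, ← sum_mul_diagonal_mul_inv_mul_conjTranspose]
  exact Finset.sum_congr rfl fun i _ => by rw [(hW i).1 (h i)]

theorem stmt17 {N k : ℕ}
    (u v : Fin N → (Fin N → ℂ))
    (hu : LinearIndependent ℂ u) (hv : LinearIndependent ℂ v)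
    (W : Fin k → Matrix (Fin N) (Fin N) ℂ) (α : Fin N → Fin k → ℂ) :
    ((∀ i θ, (W i).mulVec (u θ) = α θ i • v θ) ↔
      (∀ i, W i =
        (Matrix.of fun x θ => v θ x) * Matrix.diagonal (fun θ => α θ i) *
          (Matrix.of fun x θ => u θ x)⁻¹)) ∧
    ((∀ i θ, (W i).mulVec (u θ) = α θ i • v θ) →
      ∑ i, W i * (W i)ᴴ =
        (Matrix.of fun x θ => v θ x) *
          Matrix.hadamard (Matrix.of fun θ θ' => ∑ i, α θ i * star (α θ' i)) (gram u)⁻¹ *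
          (Matrix.of fun x θ => v θ x)ᴴ) :=
  stmt17_general u v hu W α
end
end

section
/- Let {u_θ}_{θ∈Θ} be a linearly independent family spanning H with Gram matrix G_U, and {M_θ} positive semidefinite operators on K. If ‖Σ_θ (G_U^{-1})_{θ,θ} M_θ‖ ≤ 1, then there exists a completely positive subunital map Λ : L(H) → L(K) with Λ(|u_θ⟩⟨u_θ|) = M_θ for all θ. -/
/-!
Put `G = G_U` and let `v_θ = ∑_θ' (G⁻¹)_{θ'θ} u_θ'` be the dual family, so that
`⟨v_θ, u_θ'⟩ = δ_{θθ'}` and the Gram matrix of `v` is `G⁻¹`. The map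
`Λ X = ∑_θ ⟨v_θ, X v_θ⟩ M_θ` is completely positive: writing `M_θ = ∑_i |c_{θi}⟩⟨c_{θi}|`,
its Kraus operators are `|c_{θi}⟩⟨v_θ|`. It sends `|u_θ⟩⟨u_θ|` to `M_θ`, and
`Λ I = ∑_θ (G⁻¹)_{θθ} M_θ` is a positive matrix of norm at most one, hence at most `I`.
-/

open Matrix Finset
open scoped ComplexOrder

noncomputable section

lemma isCPMap_of_eq_sum {ι : Type*} [Fintype ι] {n m : ℕ}
    {Λ : Matrix (Fin n) (Fin n) ℂ →ₗ[ℂ] Matrix (Fin m) (Fin m) ℂ}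
    (W : ι → Matrix (Fin m) (Fin n) ℂ) (hW : ∀ X, Λ X = ∑ i, W i * X * (W i)ᴴ) :
    IsCPMap Λ := by
  let e := Fintype.equivFin ι
  exact ⟨Fintype.card ι, W ∘ e.symm, fun X => by rw [hW, ← e.symm.sum_comp]; rfl⟩

lemma IsCPMap.posSemidef_map_one {n m : ℕ}
    {Λ : Matrix (Fin n) (Fin n) ℂ →ₗ[ℂ] Matrix (Fin m) (Fin m) ℂ} (hΛ : IsCPMap Λ) :
    (Λ 1).PosSemidef := by
  obtain ⟨k, W, hW⟩ := hΛ
  rw [hW]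
  exact posSemidef_sum _ fun i _ => by
    simpa only [Matrix.mul_one] using posSemidef_self_mul_conjTranspose (W i)

open scoped Matrix.Norms.L2Operator MatrixOrder in
lemma IsCPMap.isSubunital_of_opNorm_le_one {n m : ℕ}
    {Λ : Matrix (Fin n) (Fin n) ℂ →ₗ[ℂ] Matrix (Fin m) (Fin m) ℂ} (hΛ : IsCPMap Λ)
    (h : opNorm (Λ 1) ≤ 1) : IsSubunital Λ := by
  rw [IsSubunital, ← Matrix.le_iff]
  calc Λ 1 ≤ algebraMap ℝ _ ‖Λ 1‖ :=
        IsSelfAdjoint.le_algebraMap_norm_self hΛ.posSemidef_map_one.isHermitian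
    _ ≤ algebraMap ℝ _ 1 := algebraMap_mono _ h
    _ = 1 := map_one _

section MatrixIdentities

variable {R : Type*} [CommSemiring R] [StarRing R] {l k : Type*} [Fintype k]

lemma vecMulVec_mul_mul_conjTranspose (c : l → R) (w : k → R) (X : Matrix k k R) :
    vecMulVec c (star w) * X * (vecMulVec c (star w))ᴴ
      = (star w ⬝ᵥ X *ᵥ w) • vecMulVec c (star c) := by
  rw [conjTranspose_vecMulVec, star_star, vecMulVec_mul, vecMulVec_mul_vecMulVec]
  ext i j
  simp only [vecMulVec_apply, Pi.smul_apply, smul_eq_mul, dotProduct_mulVec, Matrix.smul_apply]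
  ring

lemma conjTranspose_mul_mul_apply_self (V : Matrix k l R) (X : Matrix k k R) (θ : l) :
    (Vᴴ * X * V) θ θ = star (V.col θ) ⬝ᵥ X *ᵥ V.col θ := by
  simp only [mul_apply, dotProduct, mulVec, Finset.sum_mul, Finset.mul_sum]
  rw [Finset.sum_comm]
  simp [mul_assoc]

end MatrixIdentities

section Dual

variable {K : Type*} [Field K] [StarRing K] {k l : Type*} [Fintype k] [Fintype l] [DecidableEq l]

lemma isUnit_det_conjTranspose_mul_self {𝕜 : Type*} [RCLike 𝕜] {U : Matrix k l 𝕜}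
    (hU : LinearIndependent 𝕜 U.col) : IsUnit (Uᴴ * U).det :=
  (isUnit_iff_isUnit_det _).mp
    (PosDef.conjTranspose_mul_self U (mulVec_injective_iff.mpr hU)).isUnit

def dualFamily (U : Matrix k l K) : Matrix k l K := U * (Uᴴ * U)⁻¹

lemma dualFamily_conjTranspose_mul {U : Matrix k l K} (hU : IsUnit (Uᴴ * U).det) :
    (dualFamily U)ᴴ * U = 1 := by
  rw [dualFamily, conjTranspose_mul, (isHermitian_conjTranspose_mul_self U).inv.eq, Matrix.mul_assoc,
    nonsing_inv_mul _ hU]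

lemma dualFamily_conjTranspose_mul_self {U : Matrix k l K} (hU : IsUnit (Uᴴ * U).det) :
    (dualFamily U)ᴴ * dualFamily U = (Uᴴ * U)⁻¹ := by
  rw [dualFamily, ← Matrix.mul_assoc, ← dualFamily, dualFamily_conjTranspose_mul hU,
    Matrix.one_mul]

end Dual

section Compression

variable {Θ : Type*} {n m : ℕ}

lemma gram_col (U : Matrix (Fin n) Θ ℂ) : gram U.col = Uᴴ * U := rfl

variable [Fintype Θ]

lemma conjTranspose_mul_outer_col_mul [DecidableEq Θ] {U V : Matrix (Fin n) Θ ℂ}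
    (hVU : Vᴴ * U = 1) (θ : Θ) :
    Vᴴ * outer (U.col θ) * V = single θ θ 1 := by
  have hV : Vᴴ *ᵥ U.col θ = Pi.single θ 1 := by
    rw [← mulVec_single_one U, mulVec_mulVec, hVU, one_mulVec]
  have hV' : star (U.col θ) ᵥ* V = star (Pi.single θ 1) := by
    rw [← hV, star_mulVec, conjTranspose_conjTranspose]
  rw [outer, mul_vecMulVec, vecMulVec_mul, hV, hV']
  ext i j
  by_cases hi : i = θ <;> by_cases hj : j = θ <;>
    simp [vecMulVec_apply, @eq_comm _ θ, hi, hj]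

def compressionMap (V : Matrix (Fin n) Θ ℂ) (M : Θ → Matrix (Fin m) (Fin m) ℂ) :
    Matrix (Fin n) (Fin n) ℂ →ₗ[ℂ] Matrix (Fin m) (Fin m) ℂ where
  toFun X := ∑ θ, (Vᴴ * X * V) θ θ • M θ
  map_add' X Y := by simp [Matrix.mul_add, Matrix.add_mul, add_smul, Finset.sum_add_distrib]
  map_smul' c X := by simp [Finset.smul_sum, smul_smul]

lemma compressionMap_apply (V : Matrix (Fin n) Θ ℂ) (M : Θ → Matrix (Fin m) (Fin m) ℂ)
    (X : Matrix (Fin n) (Fin n) ℂ) :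
    compressionMap V M X = ∑ θ, (Vᴴ * X * V) θ θ • M θ := rfl

lemma isCPMap_compressionMap (V : Matrix (Fin n) Θ ℂ) {M : Θ → Matrix (Fin m) (Fin m) ℂ}
    (hM : ∀ θ, (M θ).PosSemidef) : IsCPMap (compressionMap V M) := by
  choose k c hc using fun θ => posSemidef_iff_eq_sum_vecMulVec.mp (hM θ)
  refine isCPMap_of_eq_sum (fun i : Σ θ, Fin (k θ) => vecMulVec (c i.1 i.2) (star (V.col i.1)))
    fun X => ?_
  simp only [compressionMap_apply, Fintype.sum_sigma, vecMulVec_mul_mul_conjTranspose,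
    ← Finset.smul_sum, ← hc, conjTranspose_mul_mul_apply_self]

lemma compressionMap_one (V : Matrix (Fin n) Θ ℂ) (M : Θ → Matrix (Fin m) (Fin m) ℂ) :
    compressionMap V M 1 = ∑ θ, (Vᴴ * V) θ θ • M θ := by
  simp only [compressionMap_apply, Matrix.mul_one]

lemma compressionMap_outer_col [DecidableEq Θ] {U V : Matrix (Fin n) Θ ℂ} (hVU : Vᴴ * U = 1)
    (M : Θ → Matrix (Fin m) (Fin m) ℂ) (θ : Θ) :
    compressionMap V M (outer (U.col θ)) = M θ := by
  simp [compressionMap_apply, conjTranspose_mul_outer_col_mul hVU, single_apply]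

end Compression

theorem stmt18_general {Θ : Type*} [Fintype Θ] [DecidableEq Θ] {n m : ℕ}
    (u : Θ → (Fin n → ℂ))
    (hu : LinearIndependent ℂ u)
    (M : Θ → Matrix (Fin m) (Fin m) ℂ) (hM : ∀ θ, (M θ).PosSemidef)
    (hnorm : opNorm (∑ θ, ((gram u)⁻¹ θ θ) • M θ) ≤ 1) :
    ∃ Λ : Matrix (Fin n) (Fin n) ℂ →ₗ[ℂ] Matrix (Fin m) (Fin m) ℂ,
      IsCPMap Λ ∧ IsSubunital Λ ∧ ∀ θ, Λ (outer (u θ)) = M θ := by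
  set U : Matrix (Fin n) Θ ℂ := (Matrix.of u)ᵀ
  have hU : IsUnit (Uᴴ * U).det := isUnit_det_conjTranspose_mul_self hu
  have hΛ := isCPMap_compressionMap (dualFamily U) hM
  refine ⟨compressionMap (dualFamily U) M, hΛ, hΛ.isSubunital_of_opNorm_le_one ?_,
    compressionMap_outer_col (dualFamily_conjTranspose_mul hU) M⟩
  rwa [compressionMap_one, dualFamily_conjTranspose_mul_self hU, ← gram_col]

theorem stmt18 {Θ : Type*} [Fintype Θ] [DecidableEq Θ] {n m : ℕ}
    (u : Θ → (Fin n → ℂ))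
    (hu : LinearIndependent ℂ u)
    (hus : Submodule.span ℂ (Set.range u) = ⊤)
    (M : Θ → Matrix (Fin m) (Fin m) ℂ) (hM : ∀ θ, (M θ).PosSemidef)
    (hnorm : opNorm (∑ θ, ((gram u)⁻¹ θ θ) • M θ) ≤ 1) :
    ∃ Λ : Matrix (Fin n) (Fin n) ℂ →ₗ[ℂ] Matrix (Fin m) (Fin m) ℂ,
      IsCPMap Λ ∧ IsSubunital Λ ∧ ∀ θ, Λ (outer (u θ)) = M θ :=
  stmt18_general u hu M hM hnorm
end
end
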